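/- arXiv:0907.0602 — 7 statements merged into one kernel-verified Lean document; each statement's English description precedes it below -/
import Mathlib

section
/- Let X be a topological space, 𝓕 a family of nonempty subsets of X, and λ a singular infinite cardinal. Then X satisfies 𝓕-CAP*_λ if and only if X satisfies both 𝓕-CAP_λ and 𝓕-CAP_{cf λ}, where cf λ denotes the cofinality of λ. -/
open Cardinal Set Topology

universe u

/-- `x` is a `lam`-complete accumulation point of the sequence `Y`. -/
def IsCompleteAccPt {X : Type u} [TopologicalSpace X] (lam : Cardinal.{u})
    {ι : Type u} (Y : ι → Set X) (x : X) : Prop :=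
  ∀ U ∈ nhds x, #{i : ι | (Y i ∩ U).Nonempty} = lam

/-- `X` satisfies `𝓕`-CAP*_λ. -/
def CapStar {X : Type u} [TopologicalSpace X] (F : Set (Set X)) (lam : Cardinal.{u}) : Prop :=
  ∀ Y : lam.ord.ToType → Set X, (∀ i, Y i ∈ F) → ∃ x : X, IsCompleteAccPt lam Y x

/-- `X` satisfies `𝓕`-CAP_λ (distinct members). -/
def Cap {X : Type u} [TopologicalSpace X] (F : Set (Set X)) (lam : Cardinal.{u}) : Prop :=
  ∀ Y : lam.ord.ToType → Set X, (∀ i, Y i ∈ F) → Function.Injective Y →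
    ∃ x : X, IsCompleteAccPt lam Y x

/-!
For `CAP* → CAP_{cf λ}`, cut `λ` into `cf λ` blocks, each of size `< λ`, by sending an index to
a point of a cofinal set of size `cf λ` lying above it. Pulling a `cf λ`-sequence back along the
block map gives a `λ`-sequence; if fewer than `cf λ` of the original members met a neighbourhood,
fewer than `λ` indices of the pulled-back sequence would.

For the converse, take a `λ`-sequence. If some member is repeated `λ` times, any of its points is
a complete accumulation point. If the sequence has `λ` distinct members, apply `CAP_λ` to them.
Otherwise the multiplicities of the members are each `< λ` but unbounded below `λ`, so by
recursion along `cf λ` one picks `cf λ` members with strictly increasing multiplicities cofinal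
in `λ`. They are distinct, and a `cf λ`-complete accumulation
point of them is met by members of arbitrarily large multiplicity in each neighbourhood.
-/

theorem Cardinal.mk_Iic_toType_ord_lt {c : Cardinal.{u}} (hc : ℵ₀ ≤ c) (i : c.ord.ToType) :
    #(Iic i) < c := by
  simpa using mk_Iic_lt i (by simp) (by simpa)

theorem Cardinal.mk_preimage_lt_of_lt_cof {ι κ : Type u} {c : Cardinal.{u}} (hc : ℵ₀ ≤ c)
    {g : ι → κ} (hg : ∀ k, #(g ⁻¹' {k}) < c) {s : Set κ} (hs : #s < c.ord.cof) :
    #(g ⁻¹' s) < c := by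
  rw [← biUnion_preimage_singleton]
  exact (mk_biUnion_le _ s).trans_lt <|
    mul_lt_of_lt hc (hs.trans_le (Ordinal.cof_ord_le c)) (iSup_lt_of_lt_cof_ord hs fun k => hg k)

theorem Cardinal.exists_cofinal_seq (c : Cardinal.{u}) :
    ∃ b : c.ord.cof.ord.ToType → Cardinal.{u}, (∀ i, b i < c) ∧ ∀ μ < c, ∃ i, μ ≤ b i := by
  obtain ⟨f, hf⟩ := Ordinal.exists_isFundamentalSeq (o := c.ord) rfl
  refine ⟨fun i => (f (Ordinal.ToType.mk.symm i)).1.card, fun i => lt_ord.1 (f _).2,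
    fun μ hμ => ?_⟩
  obtain ⟨_, ⟨j, rfl⟩, hj⟩ := hf.isCofinal_range ⟨μ.ord, ord_lt_ord.2 hμ⟩
  exact ⟨Ordinal.ToType.mk j, by simpa using Ordinal.card_le_card hj⟩

theorem Cardinal.exists_map_toType_cof_fiber_lt {c : Cardinal.{u}} (hc : ℵ₀ ≤ c) :
    ∃ g : c.ord.ToType → c.ord.cof.ord.ToType, ∀ k, #(g ⁻¹' {k}) < c := by
  obtain ⟨s, hs, hs_card⟩ := Order.exists_cof_eq c.ord.ToType
  rw [Ordinal.cof_toType] at hs_card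
  obtain ⟨e⟩ := Cardinal.eq.1 ((mk_toType _).trans ((card_ord _).trans hs_card.symm))
  choose t ht hle using hs
  refine ⟨fun a => e.symm ⟨t a, ht a⟩, fun k => ?_⟩
  refine (mk_le_mk_of_subset fun a (ha : e.symm _ = k) => ?_).trans_lt
    (mk_Iic_toType_ord_lt hc (e k))
  rw [← ha, Equiv.apply_symm_apply]
  exact hle a

theorem Cardinal.exists_strictMono_cofinal {S : Type*} {c : Cardinal.{u}}
    (m : S → Cardinal.{u}) (hm : ∀ s, m s < c) (hm_unbounded : ∀ μ < c, ∃ s, μ < m s) :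
    ∃ A : c.ord.cof.ord.ToType → S, StrictMono (m ∘ A) ∧ ∀ μ < c, ∃ i, μ < m (A i) := by
  obtain ⟨b, hb_lt, hb_cofinal⟩ := exists_cofinal_seq c
  have hbound (i : c.ord.cof.ord.ToType) (prev : Iio i → S) :
      max (b i) (⨆ j, m (prev j)) < c :=
    max_lt (hb_lt i) (iSup_lt_of_lt_cof_ord (by simpa using mk_Iio_lt i) fun j => hm _)
  let A : c.ord.cof.ord.ToType → S := WellFoundedLT.fix fun i prev =>
    (hm_unbounded _ (hbound i fun j => prev j j.2)).choose
  have hA (i) : max (b i) (⨆ j : Iio i, m (A j)) < m (A i) := by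
    rw [show A i = _ from WellFoundedLT.fix_eq _ i]
    exact (hm_unbounded _ (hbound i fun j => A j)).choose_spec
  refine ⟨A, fun j i hji => ?_, fun μ hμ => ?_⟩
  · exact ((le_ciSup bddAbove_of_small (⟨j, hji⟩ : Iio i)).trans (le_max_right _ _)).trans_lt
      (hA i)
  · obtain ⟨i, hi⟩ := hb_cofinal μ hμ
    exact ⟨i, hi.trans_lt ((le_max_left _ _).trans_lt (hA i))⟩

section AccumulationPoints

variable {X : Type u} [TopologicalSpace X] {ι κ : Type u} {lam : Cardinal.{u}} {x : X}

theorem isCompleteAccPt_iff_le {Y : ι → Set X} (hι : #ι ≤ lam) :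
    IsCompleteAccPt lam Y x ↔ ∀ U ∈ 𝓝 x, lam ≤ #{i | (Y i ∩ U).Nonempty} :=
  forall₂_congr fun _ _ => ⟨ge_of_eq, fun h => ((mk_set_le _).trans hι).antisymm h⟩

theorem isCompleteAccPt_of_le_mk_setOf_eq {Y : ι → Set X} {A : Set X} (hι : #ι ≤ lam)
    (hxA : x ∈ A) (hA : lam ≤ #{i | Y i = A}) : IsCompleteAccPt lam Y x := by
  refine (isCompleteAccPt_iff_le hι).2 fun U hU => hA.trans (mk_le_mk_of_subset ?_)
  rintro i (hi : Y i = A)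
  exact ⟨x, hi ▸ hxA, mem_of_mem_nhds hU⟩

theorem IsCompleteAccPt.comp_of_surjective {Y : κ → Set X} {g : ι → κ}
    (hg : Function.Surjective g) (hι : #ι ≤ lam) (hx : IsCompleteAccPt lam Y x) :
    IsCompleteAccPt lam (Y ∘ g) x :=
  (isCompleteAccPt_iff_le hι).2 fun U hU =>
    (hx U hU).ge.trans (mk_preimage_of_subset_range g _ (hg.range_eq ▸ subset_univ _))

theorem IsCompleteAccPt.cof_of_comp {Y : κ → Set X} {g : ι → κ} (hlam : ℵ₀ ≤ lam)
    (hκ : #κ ≤ lam.ord.cof) (hg : ∀ k, #(g ⁻¹' {k}) < lam)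
    (hx : IsCompleteAccPt lam (Y ∘ g) x) : IsCompleteAccPt lam.ord.cof Y x :=
  (isCompleteAccPt_iff_le hκ).2 fun U hU => not_lt.1 fun hlt =>
    (mk_preimage_lt_of_lt_cof hlam hg hlt).ne (hx U hU)

theorem isCompleteAccPt_of_strictMono {Y : ι → Set X} (hι : #ι ≤ lam)
    {A : lam.ord.cof.ord.ToType → Set X} (hA_mono : StrictMono fun i => #{j | Y j = A i})
    (hA_cofinal : ∀ μ < lam, ∃ i, μ < #{j | Y j = A i})
    (hx : IsCompleteAccPt lam.ord.cof A x) : IsCompleteAccPt lam Y x := by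
  refine (isCompleteAccPt_iff_le hι).2 fun U hU => le_of_forall_lt fun μ hμ => ?_
  obtain ⟨i₀, hi₀⟩ := hA_cofinal μ hμ
  obtain ⟨i, hiU, hi₀i⟩ : ∃ i, (A i ∩ U).Nonempty ∧ i₀ ≤ i := by
    by_contra! h
    have h_small : #(Iio i₀) < lam.ord.cof := by simpa using mk_Iio_lt i₀
    exact h_small.not_ge ((hx U hU).ge.trans (mk_le_mk_of_subset fun i hi => mem_Iio.2 (h i hi)))
  calc μ < #{j | Y j = A i₀} := hi₀
    _ ≤ #{j | Y j = A i} := hA_mono.monotone hi₀i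
    _ ≤ #{j | (Y j ∩ U).Nonempty} :=
      mk_le_mk_of_subset fun j (hj : Y j = A i) => show (Y j ∩ U).Nonempty from hj ▸ hiU

end AccumulationPoints

section CAP

variable {X : Type u} [TopologicalSpace X] {F : Set (Set X)} {lam : Cardinal.{u}}

theorem CapStar.cap (h : CapStar F lam) : Cap F lam :=
  fun Y hY _ => h Y hY

theorem CapStar.cap_cof (hlam : ℵ₀ ≤ lam) (h : CapStar F lam) : Cap F lam.ord.cof := by
  intro Y hY _
  obtain ⟨g, hg⟩ := exists_map_toType_cof_fiber_lt hlam
  obtain ⟨x, hx⟩ := h (Y ∘ g) fun _ => hY _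
  exact ⟨x, hx.cof_of_comp hlam (by simp) hg⟩

theorem Cap.exists_isCompleteAccPt_of_le_mk_range (h : Cap F lam) {Z : lam.ord.ToType → Set X}
    (hZ : ∀ α, Z α ∈ F) (h_range : lam ≤ #(range Z)) : ∃ x, IsCompleteAccPt lam Z x := by
  have h_card : #lam.ord.ToType = #(range Z) := by
    simpa using h_range.antisymm (mk_range_le.trans_eq (by simp))
  obtain ⟨b⟩ := Cardinal.eq.1 h_card
  obtain ⟨x, hx⟩ := h (Subtype.val ∘ b) (fun i => forall_mem_range.2 hZ _ (b i).2)
    (Subtype.val_injective.comp b.injective)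
  have hZ_eq : Z = (Subtype.val ∘ b) ∘ (b.symm ∘ rangeFactorization Z) := by
    ext1 α; simp [rangeFactorization]
  exact ⟨x, hZ_eq ▸ hx.comp_of_surjective
    (b.symm.surjective.comp rangeFactorization_surjective) (by simp)⟩

theorem Cap.exists_isCompleteAccPt_of_mk_range_lt (h : Cap F lam.ord.cof) (hlam : ℵ₀ ≤ lam)
    {Z : lam.ord.ToType → Set X} (hZ : ∀ α, Z α ∈ F) (h_range : #(range Z) < lam)
    (h_mult : ∀ α, #{β | Z β = Z α} < lam) : ∃ x, IsCompleteAccPt lam Z x := by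
  let m : range Z → Cardinal.{u} := fun s => #{β | Z β = s.1}
  have hm : ∀ s, m s < lam := by
    rintro ⟨_, α, rfl⟩
    exact h_mult α
  have hm_unbounded : ∀ μ < lam, ∃ s, μ < m s := by
    intro μ hμ
    by_contra! h_le
    have h_fiber (s : range Z) : rangeFactorization Z ⁻¹' {s} = {β | Z β = s.1} := by
      ext β; simp [rangeFactorization, Subtype.ext_iff]
    have := mk_le_mk_mul_of_mk_preimage_le (rangeFactorization Z) fun s => by
      rw [h_fiber]; exact h_le s
    simp only [mk_toType, card_ord] at this
    exact this.not_gt (mul_lt_of_lt hlam h_range hμ)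
  obtain ⟨A, hA_mono, hA_cofinal⟩ := exists_strictMono_cofinal m hm hm_unbounded
  obtain ⟨x, hx⟩ := h (Subtype.val ∘ A) (fun i => forall_mem_range.2 hZ _ (A i).2)
    (Subtype.val_injective.comp hA_mono.injective.of_comp)
  exact ⟨x, isCompleteAccPt_of_strictMono (by simp) hA_mono hA_cofinal hx⟩

theorem capStar_of_cap (hF : ∀ f ∈ F, f.Nonempty) (hlam : ℵ₀ ≤ lam) (h : Cap F lam)
    (h_cof : Cap F lam.ord.cof) : CapStar F lam := by
  intro Z hZ
  by_cases h_mult : ∃ α, lam ≤ #{β | Z β = Z α}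
  · obtain ⟨α, hα⟩ := h_mult
    obtain ⟨x, hx⟩ := hF _ (hZ α)
    exact ⟨x, isCompleteAccPt_of_le_mk_setOf_eq (by simp) hx hα⟩
  by_cases h_range : lam ≤ #(range Z)
  · exact h.exists_isCompleteAccPt_of_le_mk_range hZ h_range
  simp only [not_exists, not_le] at h_mult h_range
  exact h_cof.exists_isCompleteAccPt_of_mk_range_lt hlam hZ h_range h_mult

end CAP

theorem stmt1_general {X : Type u} [TopologicalSpace X] (F : Set (Set X))
    (hF : ∀ f ∈ F, f.Nonempty) (lam : Cardinal.{u})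
    (hinf : Cardinal.aleph0 ≤ lam) :
    CapStar F lam ↔ (Cap F lam ∧ Cap F lam.ord.cof) :=
  ⟨fun h => ⟨h.cap, h.cap_cof hinf⟩, fun ⟨h, h_cof⟩ => capStar_of_cap hF hinf h h_cof⟩

theorem stmt1 {X : Type u} [TopologicalSpace X] (F : Set (Set X))
    (hF : ∀ f ∈ F, f.Nonempty) (lam : Cardinal.{u})
    (hinf : Cardinal.aleph0 ≤ lam) (hsing : lam.ord.cof < lam) :
    CapStar F lam ↔ (Cap F lam ∧ Cap F lam.ord.cof) :=
  stmt1_general F hF lam hinf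
end

section
/- Let X be a topological space, 𝓕 a family of nonempty subsets of X, λ a singular cardinal, and (λ_β)_{β < cf λ} a sequence of cardinals strictly smaller than λ with sup_{β < cf λ} λ_β = λ. If X satisfies CAP_{cf λ} and X satisfies 𝓕-CAP_{λ_β} for every β < cf λ, then X satisfies 𝓕-CAP*_λ. -/
open Cardinal Set Topology

universe u

/--  satisfies CAP_μ : every subset of cardinality μ has a complete accumulation point. -/
def CapSet (X : Type u) [TopologicalSpace X] (mu : Cardinal.{u}) : Prop :=
  ∀ Y : Set X, #Y = mu → ∃ x : X, ∀ U ∈ nhds x, #(↥(Y ∩ U)) = #(↥Y)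

/-!
Write `κ = cf λ`, which is regular, and `c β = sup_{γ ≤ β} λ_γ`, a monotone sequence below `λ`
with supremum `λ`. For each `β` there is a point `x β` every neighbourhood of which meets at
least `c β` of the `Y α`: pick `γ` with `c β < λ_γ`; if `Y` takes at least `λ_γ` distinct values,
apply `𝓕`-CAP_{λ_γ} to them, and otherwise some value of `Y` is repeated more than `c β` times,
and any point of it works. Applying CAP_κ (or, if the `x β` take fewer than `κ` values,
regularity of `κ`) to the sequence `x`, we get a point `p` every neighbourhood of which is a
neighbourhood of `x β` for `κ` many, hence cofinally many, `β`; since `c` is monotone, that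
neighbourhood meets `sup_β c β = λ` of the `Y α`.
-/

namespace Cardinal

theorem mk_Iio_ord_toType_lt {κ : Cardinal.{u}} (β : κ.ord.ToType) : #(Iio β) < κ := by
  simpa using mk_Iio_lt β

theorem mk_Iic_ord_toType_lt {κ : Cardinal.{u}} (hκ : ℵ₀ ≤ κ) (β : κ.ord.ToType) :
    #(Iic β) < κ := by
  rw [← Iio_insert]
  exact mk_insert_le.trans_lt
    (add_lt_of_lt hκ (mk_Iio_ord_toType_lt β) (one_lt_aleph0.trans_le hκ))

theorem isCofinal_of_le_mk {κ : Cardinal.{u}} {B : Set κ.ord.ToType} (hB : κ ≤ #B) :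
    IsCofinal B := by
  intro γ
  by_contra! h
  exact (hB.trans (mk_le_mk_of_subset (h : B ⊆ Iio γ))).not_gt (mk_Iio_ord_toType_lt γ)

theorem exists_le_mk_preimage_singleton {ι β : Type u} (f : ι → β) {κ : Cardinal.{u}}
    (hι : ℵ₀ ≤ #ι) (hβ : #β < #ι) (hκ : κ < #ι) : ∃ b, κ ≤ #(f ⁻¹' {b}) := by
  by_contra! h
  exact (mk_le_mk_mul_of_mk_preimage_le f fun b => (h b).le).not_gt (mul_lt_of_lt hι hβ hκ)

end Cardinal

variable {X : Type u} [TopologicalSpace X]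

theorem CapSet.exists_le_mk_mem_nhds {κ : Cardinal.{u}} (h : CapSet X κ) (hκ : κ.IsRegular)
    {ι : Type u} (x : ι → X) (hι : #ι = κ) : ∃ p, ∀ U ∈ 𝓝 p, κ ≤ #{i | U ∈ 𝓝 (x i)} := by
  by_cases hr : #(range x) < κ
  · obtain ⟨⟨p, _⟩, hp⟩ := infinite_pigeonhole_card (rangeFactorization x) κ hι.ge
      hκ.aleph0_le (by rwa [hκ.cof_ord])
    refine ⟨p, fun U hU => hp.trans (mk_le_mk_of_subset fun i hi => ?_)⟩
    rw [mem_ofPred_eq, show x i = p from congrArg Subtype.val hi]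
    exact hU
  · have hrange : #(range x) = κ := (mk_range_le.trans_eq hι).antisymm (not_lt.1 hr)
    obtain ⟨p, hp⟩ := h _ hrange
    refine ⟨p, fun U hU => ?_⟩
    obtain ⟨V, hVU, hV, hpV⟩ := mem_nhds_iff.1 hU
    calc κ = #↥(range x ∩ V) := ((hp V (hV.mem_nhds hpV)).trans hrange).symm
      _ = #(x '' (x ⁻¹' V)) := by rw [image_preimage_eq_range_inter]
      _ ≤ #(x ⁻¹' V) := mk_image_le
      _ ≤ #{i | U ∈ 𝓝 (x i)} :=
        mk_le_mk_of_subset fun i hi => Filter.mem_of_superset (hV.mem_nhds hi) hVU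

variable {F : Set (Set X)}

theorem Cap.exists_le_mk_of_le_mk_range {κ : Cardinal.{u}} (h : Cap F κ) {ι : Type u}
    {Y : ι → Set X} (hY : ∀ i, Y i ∈ F) (hκ : κ ≤ #(range Y)) :
    ∃ x, ∀ U ∈ 𝓝 x, κ ≤ #{i | (Y i ∩ U).Nonempty} := by
  obtain ⟨e⟩ : Nonempty (κ.ord.ToType ↪ range Y) := by rwa [← le_def, mk_toType, card_ord]
  set k := rangeSplitting Y ∘ e
  have hk : Function.Injective k := (rangeSplitting_injective Y).comp e.injective
  have hYk : Function.Injective (Y ∘ k) := fun a b hab =>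
    e.injective (Subtype.ext (by simpa [k, apply_rangeSplitting] using hab))
  obtain ⟨x, hx⟩ := h (Y ∘ k) (fun j => hY _) hYk
  exact ⟨x, fun U hU => (hx U hU).symm.trans_le (mk_preimage_of_injective k _ hk)⟩

theorem Cap.exists_le_mk_nonempty_inter (hF : ∀ f ∈ F, f.Nonempty) {κ : Cardinal.{u}}
    (h : Cap F κ) {ι : Type u} {Y : ι → Set X} (hY : ∀ i, Y i ∈ F) (hι : ℵ₀ ≤ #ι)
    (hκ : κ < #ι) : ∃ x, ∀ U ∈ 𝓝 x, κ ≤ #{i | (Y i ∩ U).Nonempty} := by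
  by_cases hr : κ ≤ #(range Y)
  · exact h.exists_le_mk_of_le_mk_range hY hr
  obtain ⟨⟨_, i₀, rfl⟩, hi₀⟩ :=
    exists_le_mk_preimage_singleton (rangeFactorization Y) hι ((not_le.1 hr).trans hκ) hκ
  obtain ⟨p, hp⟩ := hF _ (hY i₀)
  refine ⟨p, fun U hU => hi₀.trans (mk_le_mk_of_subset fun i hi => ?_)⟩
  rw [mem_ofPred_eq, show Y i = Y i₀ from congrArg Subtype.val hi]
  exact ⟨p, hp, mem_of_mem_nhds hU⟩

theorem stmt2_general {X : Type u} [TopologicalSpace X] (F : Set (Set X))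
    (hF : ∀ f ∈ F, f.Nonempty) (lam : Cardinal.{u})
    (hinf : Cardinal.aleph0 ≤ lam)
    (l : (lam.ord.cof).ord.ToType → Cardinal.{u})
    (hl : ∀ β, l β < lam) (hsup : (⨆ β, l β) = lam)
    (h1 : CapSet X lam.ord.cof)
    (h2 : ∀ β, Cap F (l β)) :
    CapStar F lam := by
  intro Y hY
  have hreg := isRegular_cof (isSuccLimit_ord hinf)
  have hmk : #lam.ord.ToType = lam := by rw [mk_toType, card_ord]
  let c β := ⨆ γ : Iic β, l γ.1
  have hc_lt β : c β < lam :=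
    iSup_lt_of_lt_cof_ord (mk_Iic_ord_toType_lt hreg.aleph0_le β) fun γ => hl γ
  have hpts β : ∃ x, ∀ U ∈ 𝓝 x, c β ≤ #{i | (Y i ∩ U).Nonempty} := by
    obtain ⟨γ, hγ⟩ := exists_lt_of_lt_ciSup' (hsup.symm ▸ hc_lt β)
    obtain ⟨x, hx⟩ :=
      (h2 γ).exists_le_mk_nonempty_inter hF hY (hmk.symm ▸ hinf) (hmk.symm ▸ hl γ)
    exact ⟨x, fun U hU => hγ.le.trans (hx U hU)⟩
  choose x hx using hpts
  obtain ⟨p, hp⟩ := h1.exists_le_mk_mem_nhds hreg x (by rw [mk_toType, card_ord])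
  refine ⟨p, fun U hU => le_antisymm ((mk_set_le _).trans_eq hmk) ?_⟩
  refine hsup.ge.trans (ciSup_le' fun γ => ?_)
  obtain ⟨β, hβU, hγβ⟩ := isCofinal_of_le_mk (hp U hU) γ
  calc l γ ≤ c β := le_ciSup bddAbove_of_small (⟨γ, hγβ⟩ : Iic β)
    _ ≤ #{i | (Y i ∩ U).Nonempty} := hx β U hβU

theorem stmt2 {X : Type u} [TopologicalSpace X] (F : Set (Set X))
    (hF : ∀ f ∈ F, f.Nonempty) (lam : Cardinal.{u})
    (hinf : Cardinal.aleph0 ≤ lam) (hsing : lam.ord.cof < lam)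
    (l : (lam.ord.cof).ord.ToType → Cardinal.{u})
    (hl : ∀ β, l β < lam) (hsup : (⨆ β, l β) = lam)
    (h1 : CapSet X lam.ord.cof)
    (h2 : ∀ β, Cap F (l β)) :
    CapStar F lam :=
  stmt2_general F hF lam hinf l hl hsup h1 h2
end

section
/- Let λ be an infinite cardinal, X a topological space, and (Y_α)_{α<λ} a λ-indexed sequence of subsets of X. A point x ∈ X is a λ-complete accumulation point of (Y_α)_{α<λ} if and only if there exists an ultrafilter D uniform over λ such that x is a D-limit point of (Y_α)_{α<λ}. -/
/-!
The sets `{α | Y α meets U}`, for `U` a neighbourhood of `x`, generate a filter `F` on `λ`, and `x` is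
a `D`-limit point exactly when `D ≤ F`. If `x` is a `λ`-complete accumulation point, every member
of `F` has cardinality `λ`, so `F` is compatible with the filter of sets whose complement has
cardinality `< λ` (a filter because `λ` is infinite); any ultrafilter refining both is uniform.
The converse is immediate from uniformity.
-/

open Cardinal Set Topology

universe u

/-- `x` is a `D`-limit point of the family `Y`. -/
def IsDLimit {X : Type u} [TopologicalSpace X] {Z : Type v} (D : Ultrafilter Z)
    (Y : Z → Set X) (x : X) : Prop :=
  ∀ U ∈ nhds x, {z : Z | (Y z ∩ U).Nonempty} ∈ D

open Filter

namespace Filter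

variable {ι : Type u} {κ : Cardinal.{u}}

def cosmall (κ : Cardinal.{u}) (hκ : ℵ₀ ≤ κ) : Filter ι :=
  comk (fun s => #s < κ) (by simpa using aleph0_pos.trans_le hκ)
    (fun _ ht _ hst => (mk_le_mk_of_subset hst).trans_lt ht)
    (fun _ hs _ ht => (mk_union_le _ _).trans_lt (add_lt_of_lt hκ hs ht))

theorem mem_cosmall {hκ : ℵ₀ ≤ κ} {s : Set ι} : s ∈ cosmall κ hκ ↔ #(sᶜ : Set ι) < κ :=
  mem_comk

theorem inf_cosmall_neBot (hκ : ℵ₀ ≤ κ) {f : Filter ι} (hf : ∀ s ∈ f, κ ≤ #s) :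
    (f ⊓ cosmall κ hκ).NeBot := by
  refine inf_neBot_iff.2 fun s hs t ht => not_disjoint_iff_nonempty_inter.1 fun hst => ?_
  have hsmall : #(tᶜ : Set ι) < κ := mem_cosmall.1 ht
  exact (hf s hs).not_gt ((mk_le_mk_of_subset hst.subset_compl_right).trans_lt hsmall)

end Filter

theorem Ultrafilter.exists_le_forall_le_mk {ι : Type u} {κ : Cardinal.{u}} (hκ : ℵ₀ ≤ κ)
    {f : Filter ι} (hf : ∀ s ∈ f, κ ≤ #s) : ∃ D : Ultrafilter ι, ↑D ≤ f ∧ ∀ A ∈ D, κ ≤ #A := by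
  have := inf_cosmall_neBot hκ hf
  refine ⟨.of (f ⊓ cosmall κ hκ), (of_le _).trans inf_le_left, fun A hA => not_lt.1 fun hA' => ?_⟩
  have hAc : Aᶜ ∈ cosmall κ hκ := mem_cosmall.2 (by rwa [compl_compl])
  exact compl_notMem_iff.2 hA (of_le _ (mem_inf_of_right hAc))

section MeetsNhds

variable {X : Type u} [TopologicalSpace X] {ι : Type u} (Y : ι → Set X) (x : X)

def meetsNhds : Filter ι :=
  (𝓝 x).lift' fun U => {i | (Y i ∩ U).Nonempty}

theorem isDLimit_iff_le_meetsNhds (D : Ultrafilter ι) : IsDLimit D Y x ↔ ↑D ≤ meetsNhds Y x :=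
  le_lift'.symm

theorem IsCompleteAccPt.le_mk_of_mem_meetsNhds {κ : Cardinal.{u}} (h : IsCompleteAccPt κ Y x)
    {s : Set ι} (hs : s ∈ meetsNhds Y x) : κ ≤ #s := by
  have hmono : Monotone fun U : Set X => {i | (Y i ∩ U).Nonempty} :=
    fun _ _ hUV _ hi => hi.mono (inter_subset_inter_right _ hUV)
  obtain ⟨U, hU, hUs⟩ := (mem_lift'_sets hmono).1 hs
  exact (h U hU).symm.le.trans (mk_le_mk_of_subset hUs)

end MeetsNhds

theorem stmt3 {X : Type u} [TopologicalSpace X] (lam : Cardinal.{u})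
    (hlam : Cardinal.aleph0 ≤ lam) (Y : lam.ord.ToType → Set X) (x : X) :
    IsCompleteAccPt lam Y x ↔
      ∃ D : Ultrafilter lam.ord.ToType, (∀ A ∈ D, #A = lam) ∧ IsDLimit D Y x := by
  constructor
  · intro h
    obtain ⟨D, hDle, hDunif⟩ :=
      Ultrafilter.exists_le_forall_le_mk hlam fun s hs => h.le_mk_of_mem_meetsNhds Y x hs
    refine ⟨D, fun A hA => le_antisymm ?_ (hDunif A hA), (isDLimit_iff_le_meetsNhds Y x D).2 hDle⟩
    exact (mk_set_le A).trans (mk_ord_toType lam).le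
  · rintro ⟨D, hDunif, hDlim⟩ U hU
    exact hDunif _ (hDlim U hU)
end

section
/- Let X be a topological space, 𝓕 a family of subsets of X, and λ a regular infinite cardinal. Then X is 𝓕-[λ,λ]-compact if and only if X satisfies 𝓕-CAP*_λ. -/
open Cardinal Set Topology

universe u

/-- `X` is `𝓕`-[μ,λ]-compact. -/
def FMuLamCompact {X : Type u} [TopologicalSpace X] (F : Set (Set X))
    (mu lam : Cardinal.{u}) : Prop :=
  ∀ C : lam.ord.ToType → Set X, (∀ α, IsClosed (C α)) →
    (∀ Z : Set lam.ord.ToType, #Z < mu → ∃ f ∈ F, f ⊆ ⋂ α ∈ Z, C α) →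
    (⋂ α, C α).Nonempty

/-!
For regular `λ`, a subset of `λ` is cofinal exactly when it has size `λ`. Hence `x` is a
`λ`-complete accumulation point of `(Y_α)` iff `x` lies in the closure of every tail
`⋃_{β ≥ α} Y_β`. Compactness applied to these tail closures (any `< λ` of them contain a
common `Y_β`, as small sets are bounded) gives CAP*; conversely, CAP* applied to members
`f_α ∈ 𝓕` of `⋂_{β ≤ α} C_β` gives a point in the closure of each tail of `f`, which lies in `C_β`.
-/

namespace Cardinal

variable {c : Cardinal.{u}}

theorem mk_Iic_toType_ord_lt_s5 (hc : ℵ₀ ≤ c) (i : c.ord.ToType) : #(Iic i) < c := by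
  simpa using mk_Iic_lt i (by simp) (by simpa using hc)

theorem IsRegular.isCofinal_iff_mk_eq (hc : c.IsRegular) {s : Set c.ord.ToType} :
    IsCofinal s ↔ #s = c := by
  refine ⟨fun hs => ((mk_set_le s).trans (mk_ord_toType c).le).antisymm ?_, fun hs => ?_⟩
  · simpa [hc.cof_ord] using Order.cof_le hs
  · by_contra hns
    obtain ⟨i, hi⟩ := not_isCofinal_iff.1 hns
    exact ((mk_le_mk_of_subset hi).trans_lt (mk_Iio_lt i (by simp))).ne (by simpa using hs)

end Cardinal

theorem isCompleteAccPt_iff_forall_mem_closure {X : Type u} [TopologicalSpace X]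
    {lam : Cardinal.{u}} (hlam : lam.IsRegular) (Y : lam.ord.ToType → Set X) (x : X) :
    IsCompleteAccPt lam Y x ↔ ∀ α, x ∈ closure (⋃ β ≥ α, Y β) := by
  simp only [IsCompleteAccPt, ← hlam.isCofinal_iff_mk_eq, IsCofinal, mem_closure_iff_nhds,
    inter_iUnion₂, nonempty_iUnion, exists_prop, mem_ofPred_eq, ge_iff_le, inter_comm,
    and_comm (b := _ ≤ _)]
  exact ⟨fun h α U hU => h U hU α, fun h U hU α => h α U hU⟩

theorem stmt5 {X : Type u} [TopologicalSpace X] (F : Set (Set X)) (lam : Cardinal.{u})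
    (hlam : lam.IsRegular) :
    FMuLamCompact F lam lam ↔ CapStar F lam := by
  constructor
  · intro hcompact Y hY
    obtain ⟨x, hx⟩ := hcompact (fun α => closure (⋃ β ≥ α, Y β)) (fun _ => isClosed_closure)
      fun Z hZ => by
        obtain ⟨β, hβ⟩ := not_isCofinal_iff.1 (mt hlam.isCofinal_iff_mk_eq.1 hZ.ne)
        exact ⟨Y β, hY β, subset_iInter₂ fun α hα =>
          (subset_biUnion_of_mem (u := Y) (hβ α hα).le).trans subset_closure⟩
    exact ⟨x, (isCompleteAccPt_iff_forall_mem_closure hlam Y x).2 (mem_iInter.1 hx)⟩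
  · intro hcap C hC hF
    choose f hfF hfC using fun α => hF (Iic α) (Cardinal.mk_Iic_toType_ord_lt_s5 hlam.aleph0_le α)
    obtain ⟨x, hx⟩ := hcap f hfF
    refine ⟨x, mem_iInter.2 fun β => closure_minimal ?_ (hC β)
      ((isCompleteAccPt_iff_forall_mem_closure hlam f x).1 hx β)⟩
    exact iUnion₂_subset fun α hα => (hfC α).trans (biInter_subset_of_mem hα)
end

section
/- Let X be a topological space, 𝓕 a family of subsets of X, and λ a regular infinite cardinal. Suppose that for every λ-indexed family (C_α)_{α<λ} of closed subsets of X such that C_α ⊇ C_β whenever α ≤ β < λ, such that each C_α is the closure of the union of some set of at most λ members of 𝓕, and such that for every α < λ there exists F ∈ 𝓕 with F ⊆ C_α, the intersection ⋂_{α<λ} C_α is nonempty. Then X satisfies 𝓕-CAP*_λ. -/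
open Cardinal Set Topology

universe u

/-!
For a sequence `(Y_α)_{α<λ}` of members of `𝓕`, the tail closures
`C_α = closure (⋃_{β ≥ α} Y_β)` satisfy the hypotheses, so they have a common point `x`.
Every neighbourhood of `x` meets `Y_β` for cofinally many `β`, and a cofinal subset of
`λ` has size `cf λ = λ` by regularity.
-/

section TailClosure

variable {X ι : Type*} [TopologicalSpace X] [Preorder ι]

def tailClosure (Y : ι → Set X) (α : ι) : Set X :=
  closure (⋃₀ (Y '' Ici α))

theorem tailClosure_antitone (Y : ι → Set X) : Antitone (tailClosure Y) :=
  fun _ _ hαβ => closure_mono (sUnion_subset_sUnion (image_mono (Ici_subset_Ici.2 hαβ)))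

theorem subset_tailClosure (Y : ι → Set X) (α : ι) : Y α ⊆ tailClosure Y α :=
  (subset_sUnion_of_mem (mem_image_of_mem Y self_mem_Ici)).trans subset_closure

theorem isCofinal_of_mem_iInter_tailClosure {Y : ι → Set X} {x : X}
    (hx : x ∈ ⋂ α, tailClosure Y α) {U : Set X} (hU : U ∈ 𝓝 x) :
    IsCofinal {i | (Y i ∩ U).Nonempty} := by
  intro α
  obtain ⟨V, hVU, hVo, hxV⟩ := mem_nhds_iff.1 hU
  obtain ⟨z, hzV, s, ⟨β, hαβ, rfl⟩, hzs⟩ := mem_closure_iff.1 (mem_iInter.1 hx α) V hVo hxV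
  exact ⟨β, ⟨z, hzs, hVU hzV⟩, hαβ⟩

end TailClosure

theorem Cardinal.IsRegular.mk_eq_of_isCofinal {lam : Cardinal.{u}} (hlam : lam.IsRegular)
    {S : Set lam.ord.ToType} (hS : IsCofinal S) : #S = lam := by
  refine le_antisymm ((mk_set_le S).trans_eq (mk_ord_toType lam)) ?_
  calc lam = Order.cof lam.ord.ToType := by rw [Ordinal.cof_toType, hlam.cof_ord]
    _ ≤ #S := Order.cof_le hS

theorem stmt6 {X : Type u} [TopologicalSpace X] (F : Set (Set X)) (lam : Cardinal.{u})
    (hlam : lam.IsRegular)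
    (h : ∀ C : lam.ord.ToType → Set X, (∀ α, IsClosed (C α)) →
      (∀ α β, α ≤ β → C β ⊆ C α) →
      (∀ α, ∃ s : Set (Set X), s ⊆ F ∧ #s ≤ lam ∧ C α = closure (⋃₀ s)) →
      (∀ α, ∃ f ∈ F, f ⊆ C α) →
      (⋂ α, C α).Nonempty) :
    CapStar F lam := by
  intro Y hY
  have hcard (α : lam.ord.ToType) : #(Y '' Ici α) ≤ lam :=
    mk_image_le.trans ((mk_set_le _).trans_eq (mk_ord_toType lam))
  obtain ⟨x, hx⟩ := h (tailClosure Y) (fun _ => isClosed_closure)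
    (fun _ _ => (tailClosure_antitone Y ·))
    (fun α => ⟨Y '' Ici α, image_subset_iff.2 fun β _ => hY β, hcard α, rfl⟩)
    (fun α => ⟨Y α, hY α, subset_tailClosure Y α⟩)
  exact ⟨x, fun U hU => hlam.mk_eq_of_isCofinal (isCofinal_of_mem_iInter_tailClosure hx hU)⟩
end

section
/- Let X be a topological space, 𝓕 a family of subsets of X, and λ an infinite cardinal. For every cardinal δ let X^δ denote the δ-th power of X with the product (Tychonoff) topology, and let 𝓕^δ be the family of all subsets of X^δ of the form ∏_{β<δ} F_β with each F_β ∈ 𝓕. Then there exists an ultrafilter D uniform over λ such that X is 𝓕-D-compact if and only if there exists an ultrafilter D uniform over λ such that, for every cardinal δ, the space X^δ is 𝓕^δ-D-compact. -/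
open Cardinal Set Topology

universe u v w

/-- `X` is `𝓕`-`D`-compact: every `Z`-indexed family of members of `𝓕` has a `D`-limit point. -/
def FDCompact {X : Type u} [TopologicalSpace X] {Z : Type v} (F : Set (Set X))
    (D : Ultrafilter Z) : Prop :=
  ∀ Y : Z → Set X, (∀ z, Y z ∈ F) → ∃ x : X, IsDLimit D Y x

/-- The family of all products of `δ` members of `𝓕`, as subsets of the power `X^δ`. -/
def PowFamily {X : Type u} (F : Set (Set X)) (δ : Cardinal.{u}) :
    Set (Set (δ.ord.ToType → X)) :=
  {s | ∃ f : δ.ord.ToType → Set X, (∀ β, f β ∈ F) ∧ s = Set.pi Set.univ f}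

/-!
A `D`-limit of a family of boxes `∏ᵢ f z i` is obtained coordinatewise: a basic neighbourhood
of `x` constrains only finitely many coordinates, and a finite intersection of members of `D`
is in `D`; nonemptiness of the factors fills in the remaining coordinates. Conversely, `X` is
a continuous image of `X¹` under the evaluation map, and continuous maps carry `D`-limits of
families to `D`-limits of their images.
-/

namespace IsDLimit

variable {Z : Type v} {D : Ultrafilter Z}

theorem pi {ι : Type*} {π : ι → Type*} [∀ i, TopologicalSpace (π i)]
    {f : Z → ∀ i, Set (π i)} {x : ∀ i, π i} (hne : ∀ z i, (f z i).Nonempty)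
    (hx : ∀ i, IsDLimit D (fun z => f z i) (x i)) :
    IsDLimit D (fun z => Set.pi univ (f z)) x := by
  classical
  intro U hU
  rw [nhds_pi, Filter.mem_pi'] at hU
  obtain ⟨I, t, ht, hIt⟩ := hU
  filter_upwards [(I.iInter_mem_sets).2 fun i _ => hx i (t i) (ht i)] with z hz
  simp only [mem_iInter, mem_ofPred_eq] at hz
  refine Nonempty.mono (inter_subset_inter_right _ hIt) ?_
  rw [← pi_univ_ite _ t, ← pi_inter_distrib, univ_pi_nonempty_iff]
  intro i
  split_ifs with hi
  · exact hz i hi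
  · simpa using hne z i

theorem of_mapsTo {X Y : Type*} [TopologicalSpace X] [TopologicalSpace Y]
    {A : Z → Set X} {B : Z → Set Y} {g : X → Y} {x : X} (hg : Continuous g)
    (hAB : ∀ z, MapsTo g (A z) (B z)) (hx : IsDLimit D A x) : IsDLimit D B (g x) := by
  intro U hU
  filter_upwards [hx _ (hg.continuousAt hU)] with z ⟨a, haA, haU⟩
  exact ⟨g a, hAB z haA, haU⟩

end IsDLimit

namespace FDCompact

variable {X : Type u} [TopologicalSpace X] {Z : Type v} {F : Set (Set X)} {D : Ultrafilter Z}

theorem nonempty_of_mem (hF : FDCompact F D) {S : Set X} (hS : S ∈ F) : S.Nonempty := by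
  obtain ⟨x, hx⟩ := hF (fun _ => S) (fun _ => hS)
  obtain ⟨z, hz⟩ := D.nonempty_of_mem (hx univ Filter.univ_mem)
  exact hz.mono inter_subset_left

theorem powFamily (hF : FDCompact F D) (δ : Cardinal.{u}) : FDCompact (PowFamily F δ) D := by
  intro Y hY
  choose f hfF hYf using hY
  choose x hx using fun β => hF (fun z => f z β) (fun z => hfF z β)
  obtain rfl : Y = fun z => Set.pi univ (f z) := funext hYf
  exact ⟨x, IsDLimit.pi (fun z β => hF.nonempty_of_mem (hfF z β)) hx⟩

theorem of_powFamily_one (hF : FDCompact (PowFamily F 1) D) : FDCompact F D := by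
  intro Y hY
  obtain ⟨i₀⟩ : Nonempty (Cardinal.ord 1).ToType :=
    Ordinal.nonempty_toType_iff.2 (by simp)
  obtain ⟨x, hx⟩ := hF (fun z => Set.pi univ fun _ => Y z) fun z => ⟨_, fun _ => hY z, rfl⟩
  refine ⟨x i₀, hx.of_mapsTo (g := fun p => p i₀) (continuous_apply i₀) fun z p hp => ?_⟩
  exact hp i₀ (mem_univ _)

end FDCompact

theorem stmt11_general {X : Type u} [TopologicalSpace X] (F : Set (Set X)) (lam : Cardinal.{u}) :
    (∃ D : Ultrafilter lam.ord.ToType, (∀ A ∈ D, #A = lam) ∧ FDCompact F D) ↔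
      ∃ D : Ultrafilter lam.ord.ToType, (∀ A ∈ D, #A = lam) ∧
        ∀ δ : Cardinal.{u}, FDCompact (PowFamily F δ) D := by
  constructor
  · rintro ⟨D, hD, hF⟩
    exact ⟨D, hD, hF.powFamily⟩
  · rintro ⟨D, hD, hF⟩
    exact ⟨D, hD, (hF 1).of_powFamily_one⟩

theorem stmt11 {X : Type u} [TopologicalSpace X] (F : Set (Set X)) (lam : Cardinal.{u})
    (hlam : Cardinal.aleph0 ≤ lam) :
    (∃ D : Ultrafilter lam.ord.ToType, (∀ A ∈ D, #A = lam) ∧ FDCompact F D) ↔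
      ∃ D : Ultrafilter lam.ord.ToType, (∀ A ∈ D, #A = lam) ∧
        ∀ δ : Cardinal.{u}, FDCompact (PowFamily F δ) D :=
  stmt11_general F lam
end

section
/- Let X be a topological space, 𝓕 a family of subsets of X, λ an infinite cardinal, and δ = min{2^{2^λ}, |𝓕|^λ} (cardinal exponentiation). Let X^δ denote the δ-th power of X with the product (Tychonoff) topology, and let 𝓕^δ be the family of all subsets of X^δ of the form ∏_{β<δ} F_β with each F_β ∈ 𝓕. If X^δ satisfies 𝓕^δ-CAP*_λ, then there exists an ultrafilter D uniform over λ such that X is 𝓕-D-compact. -/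
open Cardinal Set Topology

universe u

/-!
Put `Z = λ` and `I = δ`. For a family `(G β)_{β ∈ I}` of `Z`-sequences from `𝓕`, the sequence of
boxes `z ↦ ∏_β G β z` has a `λ`-complete accumulation point `x` in `X^I`. The traces of the
neighbourhoods of `x` on `Z` all have size `λ`, so together with the co-small sets they generate a
proper filter; an ultrafilter `D` refining it is uniform, and `x β` is a `D`-limit point of every
`G β`. Thus one uniform ultrafilter serves `δ` sequences at once. If `δ = |𝓕|^λ` these are all
the sequences; if `δ = 2^{2^λ}` they can be chosen to contain a counterexample for each of the at
most `2^{2^λ}` ultrafilters on `λ`.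
-/

def Ultrafilter.IsUniform {Z : Type u} (lam : Cardinal.{u}) (D : Ultrafilter Z) : Prop :=
  ∀ A ∈ D, #A = lam

def HasSimultaneousLimits {X : Type u} [TopologicalSpace X] (F : Set (Set X)) (lam : Cardinal.{u})
    (Z I : Type u) : Prop :=
  ∀ G : I → Z → Set X, (∀ β z, G β z ∈ F) →
    ∃ D : Ultrafilter Z, D.IsUniform lam ∧ ∀ β, ∃ x, IsDLimit D (G β) x

def cosmall (Z : Type u) (lam : Cardinal.{u}) (hlam : ℵ₀ ≤ lam) : Filter Z :=
  Filter.comk (fun s => #s < lam) (by simpa using aleph0_pos.trans_le hlam)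
    (fun _ ht _ hst => (mk_le_mk_of_subset hst).trans_lt ht)
    (fun _ hs _ ht => (mk_union_le _ _).trans_lt (add_lt_of_lt hlam hs ht))

theorem Ultrafilter.exists_isUniform_le {Z : Type u} {lam : Cardinal.{u}} (hZ : #Z = lam) (hlam : ℵ₀ ≤ lam) {L : Filter Z}
    (hL : ∀ s ∈ L, lam ≤ #s) : ∃ D : Ultrafilter Z, D.IsUniform lam ∧ ↑D ≤ L := by
  have hne : (L ⊓ cosmall Z lam hlam).NeBot := by
    refine Filter.inf_neBot_iff.2 fun s hs t ht => not_not.1 fun hst => ?_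
    have hsub : s ⊆ tᶜ := fun z hzs hzt => hst ⟨z, hzs, hzt⟩
    exact (hL s hs).not_gt ((mk_le_mk_of_subset hsub).trans_lt ht)
  let D := @Ultrafilter.of _ _ hne
  have hDle : ↑D ≤ L ⊓ cosmall Z lam hlam := Ultrafilter.of_le _
  refine ⟨D, fun A hA => ?_, hDle.trans inf_le_left⟩
  refine ((mk_set_le A).trans hZ.le).antisymm (not_lt.1 fun hlt => ?_)
  have hAc : Aᶜ ∈ D := hDle (Filter.mem_inf_of_right (by simpa [cosmall] using hlt))
  exact D.compl_notMem_iff.2 hA hAc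

section DLimit

variable {X Y : Type u} [TopologicalSpace X] [TopologicalSpace Y] {Z : Type u}

theorem IsCompleteAccPt.exists_isUniform_isDLimit {lam : Cardinal.{u}} (hZ : #Z = lam)
    (hlam : ℵ₀ ≤ lam) {S : Z → Set X} {x : X} (hx : IsCompleteAccPt lam S x) :
    ∃ D : Ultrafilter Z, D.IsUniform lam ∧ IsDLimit D S x := by
  let trace : Set X → Set Z := fun U => {z | (S z ∩ U).Nonempty}
  have htrace : Monotone trace := fun _ _ hUV _ hz => hz.mono (inter_subset_inter_right _ hUV)
  obtain ⟨D, hD, hDle⟩ := Ultrafilter.exists_isUniform_le (L := (𝓝 x).lift' trace) hZ hlam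
    fun s hs => by
      obtain ⟨U, hU, hUs⟩ := (Filter.mem_lift'_sets htrace).1 hs
      exact (hx U hU).symm.le.trans (mk_le_mk_of_subset hUs)
  exact ⟨D, hD, fun _ hU => hDle (Filter.mem_lift' hU)⟩

theorem IsDLimit.map {D : Ultrafilter Z} {S : Z → Set X} {T : Z → Set Y} {x : X} {f : X → Y}
    (hx : IsDLimit D S x) (hf : ContinuousAt f x) (hST : ∀ z, MapsTo f (S z) (T z)) :
    IsDLimit D T (f x) := fun _ hU =>
  Filter.mem_of_superset (hx _ (hf.preimage_mem_nhds hU))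
    fun _ ⟨p, hpS, hpU⟩ => ⟨f p, hST _ hpS, hpU⟩

end DLimit

namespace HasSimultaneousLimits

variable {X : Type u} [TopologicalSpace X] {F : Set (Set X)} {lam : Cardinal.{u}} {Z I : Type u}

theorem of_capStar {δ : Cardinal.{u}} (hlam : ℵ₀ ≤ lam) (h : CapStar (PowFamily F δ) lam) :
    HasSimultaneousLimits F lam lam.ord.ToType δ.ord.ToType := by
  intro G hG
  obtain ⟨x, hx⟩ := h (fun z => Set.pi univ fun β => G β z) fun z => ⟨_, fun β => hG β z, rfl⟩
  obtain ⟨D, hD, hDx⟩ := hx.exists_isUniform_isDLimit (by simp) hlam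
  exact ⟨D, hD, fun β => ⟨x β, hDx.map (continuous_apply β).continuousAt
    fun _ _ hp => hp β (mem_univ β)⟩⟩

theorem exists_fdCompact_of_equiv (hP : HasSimultaneousLimits F lam Z I) (e : I ≃ (Z → F)) :
    ∃ D : Ultrafilter Z, D.IsUniform lam ∧ FDCompact F D := by
  obtain ⟨D, hD, hlim⟩ := hP (fun β z => e β z) fun β z => (e β z).2
  refine ⟨D, hD, fun S hS => ?_⟩
  simpa using hlim (e.symm fun z => ⟨S z, hS z⟩)

theorem exists_fdCompact_of_surjective (hP : HasSimultaneousLimits F lam Z I)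
    {s : I → Ultrafilter Z} (hs : s.Surjective) (hF : F.Nonempty) :
    ∃ D : Ultrafilter Z, D.IsUniform lam ∧ FDCompact F D := by
  have hwit : ∀ D : Ultrafilter Z, ∃ S : Z → Set X, (∀ z, S z ∈ F) ∧
      (¬FDCompact F D → ∀ x, ¬IsDLimit D S x) := by
    intro D
    by_cases hD : FDCompact F D
    · exact ⟨fun _ => hF.some, fun _ => hF.some_mem, fun h => (h hD).elim⟩
    · simp only [FDCompact, not_forall, not_exists] at hD
      obtain ⟨S, hSF, hS⟩ := hD
      exact ⟨S, hSF, fun _ => hS⟩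
  choose W hWF hW using hwit
  obtain ⟨D, hD, hlim⟩ := hP (fun β => W (s β)) fun β => hWF (s β)
  refine ⟨D, hD, by_contra fun hnot => ?_⟩
  obtain ⟨β, rfl⟩ := hs D
  obtain ⟨x, hx⟩ := hlim β
  exact hW _ hnot x hx

end HasSimultaneousLimits

theorem mk_ultrafilter_le (Z : Type u) :
    #(Ultrafilter Z) ≤ (2 : Cardinal.{u}) ^ (2 : Cardinal.{u}) ^ #Z := by
  rw [← mk_set, ← mk_set]
  exact mk_le_of_injective fun D₁ D₂ h => Ultrafilter.coe_injective (Filter.filter_eq h)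

theorem stmt13 {X : Type u} [TopologicalSpace X] (F : Set (Set X)) (lam : Cardinal.{u})
    (hlam : Cardinal.aleph0 ≤ lam)
    (δ : Cardinal.{u}) (hδ : δ = min ((2 : Cardinal.{u}) ^ ((2 : Cardinal.{u}) ^ lam)) (#F ^ lam))
    (h : CapStar (PowFamily F δ) lam) :
    ∃ D : Ultrafilter lam.ord.ToType, (∀ A ∈ D, #A = lam) ∧ FDCompact F D := by
  have hP := HasSimultaneousLimits.of_capStar hlam h
  have hlam0 : lam ≠ 0 := (aleph0_pos.trans_le hlam).ne'
  rcases le_total (#F ^ lam) ((2 : Cardinal.{u}) ^ (2 : Cardinal.{u}) ^ lam) with hle | hle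
  · obtain ⟨e⟩ : Nonempty (δ.ord.ToType ≃ (lam.ord.ToType → F)) := by
      rw [← Cardinal.eq]
      simp [hδ, min_eq_right hle]
    exact hP.exists_fdCompact_of_equiv e
  · have hF : F.Nonempty := by
      by_contra hF
      simp only [not_nonempty_iff_eq_empty.1 hF, mk_eq_zero, zero_power hlam0,
        nonpos_iff_eq_zero] at hle
      exact (power_pos _ two_pos).ne' hle
    have hU : #(Ultrafilter lam.ord.ToType) ≤ #δ.ord.ToType := by
      simpa [hδ, min_eq_left hle] using mk_ultrafilter_le lam.ord.ToType
    have : Nonempty lam.ord.ToType := mk_ne_zero_iff.1 (by simpa using hlam0)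
    obtain ⟨s, hs⟩ := Function.exists_surjective_iff.2
      ⟨⟨fun _ => pure (Classical.arbitrary _)⟩, hU⟩
    exact hP.exists_fdCompact_of_surjective hs hF
end
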